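/- Let x_α, y_α be rational numbers, τ in the upper half plane, x, z ∈ ℂ, and p, q ∈ ℤ; assume θ(x|τ) ≠ 0 and θ(2πi(z − x_α − y_α τ)|τ) ≠ 0. Then e^{−(y_α+q)x} · F(x, z − (x_α + p) − (y_α + q)τ, τ) = e^{−y_α x} · F(x, z − x_α − y_α τ, τ). (Hence the function h_α(x,z|τ) := e^{−y_α x}F(x, z − x_α − y_α τ, τ) − 2πi/x is independent of the choice of lift (x_α, y_α) ∈ ℚ² of the N-torsion parameter α ∈ (N^{−1}ℤ/ℤ)².) -/

import Mathlib

open Complex Filter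

/-- The Jacobi theta function `θ(z|τ) = ∑_{n∈ℤ} (−1)^n e^{iπτ(n+1/2)²} e^{z(n+1/2)}`. -/
noncomputable def jTheta (z : ℂ) (τ : UpperHalfPlane) : ℂ :=
  ∑' n : ℤ, (-1 : ℂ) ^ n * Complex.exp (Real.pi * I * (τ : ℂ) * ((n : ℂ) + 1/2) ^ 2)
    * Complex.exp (z * ((n : ℂ) + 1/2))

/-- The Jacobi form `F(x,z,τ) = 2πi θ'(0|τ) θ(x+2πiz|τ)/(θ(x|τ) θ(2πiz|τ))`. -/
noncomputable def jacobiF (x z : ℂ) (τ : UpperHalfPlane) : ℂ :=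
  2 * Real.pi * I * deriv (fun w => jTheta w τ) 0 * jTheta (x + 2 * Real.pi * I * z) τ /
    (jTheta x τ * jTheta (2 * Real.pi * I * z) τ)

/-!
Shifting the argument of `θ` by a lattice vector `2πi(p + qτ)` multiplies it by an automorphy
factor `±e^{qu − πiτq²}`, which is seen by reindexing the series `n ↦ n + q`. In `F(x, w, τ)` the
factors of numerator and denominator differ exactly by `e^{qx}`, and this cancels against the
shift `y_α ↦ y_α + q` in the prefactor `e^{−y_α x}`.
-/

lemma neg_one_zpow_eq_exp (k : ℤ) : (-1 : ℂ) ^ k = exp (k * (Real.pi * I)) := by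
  rw [exp_int_mul, exp_pi_mul_I]

lemma jTheta_sub_lattice (u : ℂ) (τ : UpperHalfPlane) (p q : ℤ) :
    jTheta (u - 2 * Real.pi * I * (p + q * τ)) τ
      = (-1 : ℂ) ^ (p + q) * exp (q * u - Real.pi * I * τ * q ^ 2) * jTheta u τ := by
  unfold jTheta
  rw [← (Equiv.addRight q).tsum_eq, ← tsum_mul_left]
  refine tsum_congr fun n => ?_
  simp only [Equiv.coe_addRight, neg_one_zpow_eq_exp, ← exp_add]
  rw [exp_eq_exp_iff_exists_int]
  exact ⟨-(p * (n + q)) - p, by push_cast; ring⟩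

lemma jacobiF_sub_lattice (x w : ℂ) (τ : UpperHalfPlane) (p q : ℤ) :
    jacobiF x (w - p - q * τ) τ = exp (q * x) * jacobiF x w τ := by
  have hshift (a : ℂ) : a + 2 * Real.pi * I * (w - p - q * τ)
      = a + 2 * Real.pi * I * w - 2 * Real.pi * I * (p + q * τ) := by ring
  have hshift₀ := hshift 0
  rw [zero_add, zero_add] at hshift₀
  have hfactor : exp (q * (x + 2 * Real.pi * I * w) - Real.pi * I * τ * q ^ 2)
      = exp (q * x) * exp (q * (2 * Real.pi * I * w) - Real.pi * I * τ * q ^ 2) := by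
    rw [← exp_add]; ring_nf
  unfold jacobiF
  rw [hshift, hshift₀, jTheta_sub_lattice, jTheta_sub_lattice, hfactor]
  field_simp

theorem hKZB_lift_independent_general (xα yα : ℚ) (τ : UpperHalfPlane) (x z : ℂ) (p q : ℤ) :
    Complex.exp (-((yα : ℂ) + (q : ℂ)) * x) *
        jacobiF x (z - ((xα : ℂ) + (p : ℂ)) - ((yα : ℂ) + (q : ℂ)) * (τ : ℂ)) τ
      = Complex.exp (-(yα : ℂ) * x) * jacobiF x (z - (xα : ℂ) - (yα : ℂ) * (τ : ℂ)) τ := by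
  have hlift : z - ((xα : ℂ) + (p : ℂ)) - ((yα : ℂ) + (q : ℂ)) * (τ : ℂ)
      = (z - (xα : ℂ) - (yα : ℂ) * (τ : ℂ)) - (p : ℂ) - (q : ℂ) * (τ : ℂ) := by ring
  rw [hlift, jacobiF_sub_lattice, ← mul_assoc, ← exp_add]
  ring_nf

/-- Independence of `h_α` from the choice of lift of the torsion parameter: for rationals
`x_α, y_α`, integers `p, q`, and `τ ∈ ℍ`, assuming `θ(x|τ) ≠ 0` and
`θ(2πi(z − x_α − y_α τ)|τ) ≠ 0`,
`e^{−(y_α+q)x} F(x, z − (x_α+p) − (y_α+q)τ, τ) = e^{−y_α x} F(x, z − x_α − y_α τ, τ)`. -/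
theorem hKZB_lift_independent (xα yα : ℚ) (τ : UpperHalfPlane) (x z : ℂ) (p q : ℤ)
    (hx : jTheta x τ ≠ 0)
    (hz : jTheta (2 * Real.pi * I * (z - (xα : ℂ) - (yα : ℂ) * (τ : ℂ))) τ ≠ 0) :
    Complex.exp (-((yα : ℂ) + (q : ℂ)) * x) *
        jacobiF x (z - ((xα : ℂ) + (p : ℂ)) - ((yα : ℂ) + (q : ℂ)) * (τ : ℂ)) τ
      = Complex.exp (-(yα : ℂ) * x) * jacobiF x (z - (xα : ℂ) - (yα : ℂ) * (τ : ℂ)) τ :=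
  hKZB_lift_independent_general xα yα τ x z p q
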